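/- arXiv:1911.11043 — 2 statements merged into one kernel-verified Lean document; each statement's English description precedes it below -/
import Mathlib

section
/- If Y = Y1* · A + Y0* · (1 − A) almost surely with A Bernoulli(1/2) independent of (Y0*, Y1*, X), then for every measurable decision rule d_β(x) = 1{xᵀβ > 0}, E[(A·1{xᵀβ>0} + (1−A)·1{xᵀβ≤0})·Y] = (1/2)·E[μ(1,X)·1{Xᵀβ>0} + μ(0,X)·1{Xᵀβ≤0}], where μ(a,x) = E[Ya*|X=x]. In particular this equals (1/2)·V(β) with V(β) = E[Y1*·d_β(X) + Y0*·(1−d_β(X))]. -/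
/-!
Because `A ∈ {0, 1}` and `Y = Y1 A + Y0 (1 - A)`, the agreement weight times `Y` equals
`A · 1_S Y1 + (1 - A) · 1_{Sᶜ} Y0` with `S = {Xᵀβ > 0}`. Both `1_S Y1` and `1_{Sᶜ} Y0` are
functions of `(Y0, Y1, X)`, hence independent of `A`, so each expectation factors with
`E[A] = E[1 - A] = 1/2`. Replacing `Ya` by `E[Ya | X]` does not change the integral over
the `σ(X)`-measurable sets `S` and `Sᶜ`.
-/

open MeasureTheory ProbabilityTheory

theorem integral_indicator_add_indicator_condExp {Ω : Type*} {m m₀ : MeasurableSpace Ω}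
    {μ : Measure Ω} (hm : m ≤ m₀) [SigmaFinite (μ.trim hm)] {f g : Ω → ℝ} {S : Set Ω}
    (hS : MeasurableSet[m] S) (hf : Integrable f μ) (hg : Integrable g μ) :
    ∫ ω, (S.indicator (μ[f | m]) ω + Sᶜ.indicator (μ[g | m]) ω) ∂μ
      = ∫ ω, (S.indicator f ω + Sᶜ.indicator g ω) ∂μ := by
  have hS₀ : MeasurableSet[m₀] S := hm S hS
  rw [integral_add (integrable_condExp.indicator hS₀) (integrable_condExp.indicator hS₀.compl),
    integral_add (hf.indicator hS₀) (hg.indicator hS₀.compl),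
    integral_indicator hS₀, integral_indicator hS₀, integral_indicator hS₀.compl,
    integral_indicator hS₀.compl, setIntegral_condExp hm hf hS,
    setIntegral_condExp hm hg hS.compl]

section

variable {Ω : Type*} [MeasurableSpace Ω] {P : Measure Ω}

theorem integral_eq_half_and_integral_one_sub_eq_half [IsProbabilityMeasure P] {A : Ω → ℝ}
    (hA01 : ∀ ω, A ω = 0 ∨ A ω = 1) (hA : Measurable A)
    (hAhalf : P {ω | A ω = 1} = 1 / 2) :
    ∫ ω, A ω ∂P = 1 / 2 ∧ ∫ ω, (1 - A ω) ∂P = 1 / 2 := by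
  have hA_eq : A = {ω | A ω = 1}.indicator 1 := by
    funext ω
    rcases hA01 ω with h | h <;> simp [h]
  have hA_set : MeasurableSet {ω | A ω = 1} := hA (measurableSet_singleton 1)
  have hEA : ∫ ω, A ω ∂P = 1 / 2 := by
    rw [hA_eq, integral_indicator_one hA_set, measureReal_def, hAhalf]
    norm_num
  refine ⟨hEA, ?_⟩
  rw [integral_sub (integrable_const 1) (hA_eq ▸ (integrable_const 1).indicator hA_set), hEA]
  norm_num

theorem ProbabilityTheory.IndepFun.integral_mul_comp {F : Type*} [MeasurableSpace F]
    {A : Ω → ℝ} {W : Ω → F} (h : IndepFun A W P) {φ : F → ℝ} (hφ : Measurable φ)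
    (hA : AEStronglyMeasurable A P) (hφW : AEStronglyMeasurable (fun ω => φ (W ω)) P) :
    ∫ ω, A ω * φ (W ω) ∂P = (∫ ω, A ω ∂P) * ∫ ω, φ (W ω) ∂P :=
  (h.comp measurable_id hφ).integral_fun_mul_eq_mul_integral hA hφW

theorem integral_indicator_agree_mul_eq_half_integral [IsProbabilityMeasure P]
    {E : Type*} [MeasurableSpace E] {A Y Y0 Y1 : Ω → ℝ} {X : Ω → E} {S : Set Ω}
    (hA01 : ∀ ω, A ω = 0 ∨ A ω = 1) (hA : Measurable A) (hAhalf : P {ω | A ω = 1} = 1 / 2)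
    (hindep : IndepFun A (fun ω => (Y0 ω, Y1 ω, X ω)) P)
    (hX : Measurable X) (hS : MeasurableSet[MeasurableSpace.comap X inferInstance] S)
    (hY0 : Integrable Y0 P) (hY1 : Integrable Y1 P)
    (hY : ∀ᵐ ω ∂P, Y ω = Y1 ω * A ω + Y0 ω * (1 - A ω)) :
    ∫ ω, (S.indicator A ω + Sᶜ.indicator (fun ω => 1 - A ω) ω) * Y ω ∂P
      = 1 / 2 * ∫ ω, (S.indicator Y1 ω + Sᶜ.indicator Y0 ω) ∂P := by
  have hS₀ : MeasurableSet S := hX.comap_le S hS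
  obtain ⟨B, hB, rfl⟩ := hS
  obtain ⟨hEA, hE1A⟩ := integral_eq_half_and_integral_one_sub_eq_half hA01 hA hAhalf
  have hA_bound : ∀ ω, ‖A ω‖ ≤ 1 ∧ ‖1 - A ω‖ ≤ 1 := fun ω => by
    rcases hA01 ω with h | h <;> simp [h]
  have hT : MeasurableSet (Prod.snd ⁻¹' (Prod.snd ⁻¹' B) : Set (ℝ × ℝ × E)) :=
    measurable_snd (measurable_snd hB)
  have h1 : ∫ ω, A ω * (X ⁻¹' B).indicator Y1 ω ∂P
      = 1 / 2 * ∫ ω, (X ⁻¹' B).indicator Y1 ω ∂P := by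
    rw [← hEA]
    -- `(X ⁻¹' B).indicator Y1` is definitionally a function of `(Y0, Y1, X)`.
    exact hindep.integral_mul_comp (φ := (Prod.snd ⁻¹' (Prod.snd ⁻¹' B)).indicator (·.2.1))
      ((measurable_fst.comp measurable_snd).indicator hT) hA.aestronglyMeasurable
      (hY1.indicator hS₀).aestronglyMeasurable
  have h0 : ∫ ω, (1 - A ω) * (X ⁻¹' B)ᶜ.indicator Y0 ω ∂P
      = 1 / 2 * ∫ ω, (X ⁻¹' B)ᶜ.indicator Y0 ω ∂P := by
    rw [← hE1A]
    exact (hindep.comp (measurable_const.sub measurable_id) measurable_id).integral_mul_comp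
      (φ := (Prod.snd ⁻¹' (Prod.snd ⁻¹' B))ᶜ.indicator (·.1))
      (measurable_fst.indicator hT.compl) (measurable_const.sub hA).aestronglyMeasurable
      (hY0.indicator hS₀.compl).aestronglyMeasurable
  have hint1 : Integrable (fun ω => A ω * (X ⁻¹' B).indicator Y1 ω) P :=
    (hY1.indicator hS₀).bdd_mul hA.aestronglyMeasurable (ae_of_all _ fun ω => (hA_bound ω).1)
  have hint0 : Integrable (fun ω => (1 - A ω) * (X ⁻¹' B)ᶜ.indicator Y0 ω) P :=
    (hY0.indicator hS₀.compl).bdd_mul (measurable_const.sub hA).aestronglyMeasurable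
      (ae_of_all _ fun ω => (hA_bound ω).2)
  calc _ = ∫ ω, (A ω * (X ⁻¹' B).indicator Y1 ω
        + (1 - A ω) * (X ⁻¹' B)ᶜ.indicator Y0 ω) ∂P := by
        refine integral_congr_ae ?_
        filter_upwards [hY] with ω hYω
        rcases hA01 ω with h | h <;> by_cases hω : ω ∈ X ⁻¹' B <;> simp [hYω, h, hω]
    _ = 1 / 2 * ∫ ω, ((X ⁻¹' B).indicator Y1 ω + (X ⁻¹' B)ᶜ.indicator Y0 ω) ∂P := by
        rw [integral_add hint1 hint0, h1, h0,
          integral_add (hY1.indicator hS₀) (hY0.indicator hS₀.compl), mul_add]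

end

theorem stmt0_general {Ω : Type*} [MeasurableSpace Ω] (P : Measure Ω) [IsProbabilityMeasure P]
    {p : ℕ} (Y0 Y1 : Ω → ℝ) (X : Ω → (Fin p → ℝ)) (A Y : Ω → ℝ)
    (hY0 : Integrable Y0 P) (hY1 : Integrable Y1 P)
    (hA01 : ∀ ω, A ω = 0 ∨ A ω = 1)
    (hAmeas : Measurable A) (hXmeas : Measurable X)
    (hAhalf : P {ω | A ω = 1} = 1/2)
    (hindep : IndepFun A (fun ω => (Y0 ω, Y1 ω, X ω)) P)
    (hconsistency : ∀ᵐ ω ∂P, Y ω = Y1 ω * A ω + Y0 ω * (1 - A ω))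
    (β : Fin p → ℝ) :
    (∫ ω, (A ω * (if 0 < ∑ i, X ω i * β i then (1:ℝ) else 0)
        + (1 - A ω) * (if ∑ i, X ω i * β i ≤ 0 then (1:ℝ) else 0)) * Y ω ∂P)
      = (1/2) * ∫ ω, ((P[Y1 | MeasurableSpace.comap X inferInstance]) ω
            * (if 0 < ∑ i, X ω i * β i then (1:ℝ) else 0)
          + (P[Y0 | MeasurableSpace.comap X inferInstance]) ω
            * (if ∑ i, X ω i * β i ≤ 0 then (1:ℝ) else 0)) ∂P
    ∧ (∫ ω, (A ω * (if 0 < ∑ i, X ω i * β i then (1:ℝ) else 0)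
        + (1 - A ω) * (if ∑ i, X ω i * β i ≤ 0 then (1:ℝ) else 0)) * Y ω ∂P)
      = (1/2) * ∫ ω, (Y1 ω * (if 0 < ∑ i, X ω i * β i then (1:ℝ) else 0)
          + Y0 ω * (1 - (if 0 < ∑ i, X ω i * β i then (1:ℝ) else 0))) ∂P := by
  set S : Set Ω := {ω | 0 < ∑ i, X ω i * β i}
  have hS : MeasurableSet[MeasurableSpace.comap X inferInstance] S :=
    ⟨{v | 0 < ∑ i, v i * β i}, measurableSet_lt measurable_const (by fun_prop), rfl⟩
  have hrule : ∀ (f g : Ω → ℝ) ω, f ω * (if 0 < ∑ i, X ω i * β i then (1:ℝ) else 0)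
      + g ω * (if ∑ i, X ω i * β i ≤ 0 then (1:ℝ) else 0)
      = S.indicator f ω + Sᶜ.indicator g ω := by
    intro f g ω
    by_cases h : 0 < ∑ i, X ω i * β i <;> simp [S, h]
  have hcompl : ∀ ω, 1 - (if 0 < ∑ i, X ω i * β i then (1:ℝ) else 0)
      = if ∑ i, X ω i * β i ≤ 0 then (1:ℝ) else 0 := by
    intro ω
    by_cases h : 0 < ∑ i, X ω i * β i <;> simp [h]
  simp_rw [hcompl, hrule A (fun ω => 1 - A ω), hrule]
  have hvalue := integral_indicator_agree_mul_eq_half_integral hA01 hAmeas hAhalf hindep hXmeas hS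
    hY0 hY1 hconsistency
  refine ⟨?_, hvalue⟩
  rw [hvalue, integral_indicator_add_indicator_condExp hXmeas.comap_le hS hY1 hY0]

theorem stmt0 {Ω : Type*} [MeasurableSpace Ω] (P : Measure Ω) [IsProbabilityMeasure P]
    {p : ℕ} (Y0 Y1 : Ω → ℝ) (X : Ω → (Fin p → ℝ)) (A Y : Ω → ℝ)
    (hY0 : Integrable Y0 P) (hY1 : Integrable Y1 P)
    (hA01 : ∀ ω, A ω = 0 ∨ A ω = 1)
    (hAmeas : Measurable A) (hXmeas : Measurable X)
    (hY0meas : Measurable Y0) (hY1meas : Measurable Y1)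
    (hAhalf : P {ω | A ω = 1} = 1/2)
    (hindep : IndepFun A (fun ω => (Y0 ω, Y1 ω, X ω)) P)
    (hconsistency : ∀ᵐ ω ∂P, Y ω = Y1 ω * A ω + Y0 ω * (1 - A ω))
    (β : Fin p → ℝ) :
    (∫ ω, (A ω * (if 0 < ∑ i, X ω i * β i then (1:ℝ) else 0)
        + (1 - A ω) * (if ∑ i, X ω i * β i ≤ 0 then (1:ℝ) else 0)) * Y ω ∂P)
      = (1/2) * ∫ ω, ((P[Y1 | MeasurableSpace.comap X inferInstance]) ω
            * (if 0 < ∑ i, X ω i * β i then (1:ℝ) else 0)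
          + (P[Y0 | MeasurableSpace.comap X inferInstance]) ω
            * (if ∑ i, X ω i * β i ≤ 0 then (1:ℝ) else 0)) ∂P
    ∧ (∫ ω, (A ω * (if 0 < ∑ i, X ω i * β i then (1:ℝ) else 0)
        + (1 - A ω) * (if ∑ i, X ω i * β i ≤ 0 then (1:ℝ) else 0)) * Y ω ∂P)
      = (1/2) * ∫ ω, (Y1 ω * (if 0 < ∑ i, X ω i * β i then (1:ℝ) else 0)
          + Y0 ω * (1 - (if 0 < ∑ i, X ω i * β i then (1:ℝ) else 0))) ∂P :=
  stmt0_general P Y0 Y1 X A Y hY0 hY1 hA01 hAmeas hXmeas hAhalf hindep hconsistency β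
end

section
/- Let Q be a symmetric negative definite (p−1)×(p−1) real matrix with eigenvalue of smallest absolute value ω_min ≠ 0, and let (θ_n) be a sequence of random vectors in ℝ^{p−1} and (h_n) positive reals with h_n → 0 and h_n‖θ_n‖ → 0 in probability. Suppose ‖Qθ_n‖ ≤ ε_n + α₁h_n‖θ_n‖ + α₂h_n‖θ_n‖² where ε_n → 0 in probability and α₁, α₂ are fixed finite constants. Then ‖θ_n‖ → 0 in probability. -/
open MeasureTheory RealInnerProductSpace Filter Topology

/-!
A negative definite `Q` is injective, hence bounded below on a finite-dimensional space:
`‖v‖ ≤ C ‖Q v‖`. Off the events `{|εₙ| > δ / 2C}` and `{hₙ ‖θₙ‖ > κ}`, whose probabilities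
tend to `0`, and once `hₙ ≤ κ` for a small enough `κ`, both perturbation terms are at most
`‖θₙ‖ / 4C`, so the bound gives `‖θₙ‖ ≤ δ / 2 + ‖θₙ‖ / 2`, i.e. `‖θₙ‖ ≤ δ`.
-/

lemma LinearMap.injective_of_inner_map_self_neg {E : Type*} [NormedAddCommGroup E]
    [InnerProductSpace ℝ E] (Q : E →ₗ[ℝ] E) (hneg : ∀ v, v ≠ 0 → ⟪Q v, v⟫ < 0) :
    Function.Injective Q := by
  refine (injective_iff_map_eq_zero Q).mpr fun v hv => ?_
  by_contra hv0
  simpa [hv] using hneg v hv0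

lemma LinearMap.exists_pos_norm_le_mul_norm_apply {E F : Type*} [NormedAddCommGroup E]
    [NormedSpace ℝ E] [FiniteDimensional ℝ E] [NormedAddCommGroup F] [NormedSpace ℝ F]
    (f : E →ₗ[ℝ] F) (hf : Function.Injective f) : ∃ C > 0, ∀ v, ‖v‖ ≤ C * ‖f v‖ := by
  obtain ⟨K, hK, hfK⟩ := f.injective_iff_antilipschitz.mp hf
  exact ⟨K, hK, fun v => by simpa using hfK.le_mul_norm_sub 0 v⟩

lemma le_of_le_mul_add_linear_quadratic {C ε h t α₁ α₂ κ δ : ℝ} (hC : 0 < C) (hh : 0 ≤ h)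
    (ht : 0 ≤ t) (hbound : t ≤ C * (ε + α₁ * h * t + α₂ * h * t ^ 2))
    (hκ : C * (|α₁| + |α₂|) * κ ≤ 1 / 4) (hε : |ε| ≤ δ / (2 * C)) (hhκ : h ≤ κ)
    (hhtκ : h * t ≤ κ) : t ≤ δ := by
  have hε' : C * ε ≤ δ / 2 := by
    calc C * ε ≤ C * (δ / (2 * C)) := by gcongr; exact (le_abs_self ε).trans hε
      _ = δ / 2 := by field_simp
  have hlin : α₁ * h ≤ |α₁| * κ := by
    calc α₁ * h ≤ |α₁| * h := by gcongr; exact le_abs_self α₁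
      _ ≤ |α₁| * κ := by gcongr
  have hquad : α₂ * (h * t) ≤ |α₂| * κ := by
    calc α₂ * (h * t) ≤ |α₂| * (h * t) := by gcongr; exact le_abs_self α₂
      _ ≤ |α₂| * κ := by gcongr
  have hperturb : C * (α₁ * h * t + α₂ * h * t ^ 2) ≤ t / 4 := by
    calc C * (α₁ * h * t + α₂ * h * t ^ 2) = C * (α₁ * h + α₂ * (h * t)) * t := by ring
      _ ≤ C * (|α₁| * κ + |α₂| * κ) * t := by gcongr
      _ ≤ 1 / 4 * t := by gcongr; linarith
      _ = t / 4 := by ring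
  linarith

lemma tendsto_measure_zero_of_eventually_subset_union {Ω ι : Type*} [MeasurableSpace Ω]
    (μ : Measure Ω) {l : Filter ι} {A B D : ι → Set Ω} (hsub : ∀ᶠ i in l, A i ⊆ B i ∪ D i)
    (hB : Tendsto (fun i => μ (B i)) l (𝓝 0)) (hD : Tendsto (fun i => μ (D i)) l (𝓝 0)) :
    Tendsto (fun i => μ (A i)) l (𝓝 0) := by
  have hBD : Tendsto (fun i => μ (B i) + μ (D i)) l (𝓝 0) := by simpa using hB.add hD
  refine tendsto_of_tendsto_of_tendsto_of_le_of_le' tendsto_const_nhds hBD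
    (Eventually.of_forall fun _ => zero_le) ?_
  filter_upwards [hsub] with i hi
  exact (measure_mono hi).trans (measure_union_le _ _)

theorem stmt14_general {Ω : Type*} [MeasurableSpace Ω] (ℙ : Measure Ω) [IsProbabilityMeasure ℙ]
    {m : ℕ} (Q : EuclideanSpace ℝ (Fin m) →ₗ[ℝ] EuclideanSpace ℝ (Fin m))
    (hneg : ∀ v : EuclideanSpace ℝ (Fin m), v ≠ 0 → ⟪Q v, v⟫ < 0)
    (θ : ℕ → Ω → EuclideanSpace ℝ (Fin m)) (εn : ℕ → Ω → ℝ) (h : ℕ → ℝ) (α₁ α₂ : ℝ)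
    (hpos : ∀ n, 0 < h n)
    (hh : Filter.Tendsto h Filter.atTop (nhds 0))
    (hεconv : ∀ δ : ℝ, 0 < δ →
      Filter.Tendsto (fun n => ℙ {ω | δ < |εn n ω|}) Filter.atTop (nhds 0))
    (hθh : ∀ δ : ℝ, 0 < δ →
      Filter.Tendsto (fun n => ℙ {ω | δ < h n * ‖θ n ω‖}) Filter.atTop (nhds 0))
    (hbound : ∀ n ω, ‖Q (θ n ω)‖ ≤ εn n ω + α₁ * h n * ‖θ n ω‖ + α₂ * h n * ‖θ n ω‖^2) :
    ∀ δ : ℝ, 0 < δ →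
      Filter.Tendsto (fun n => ℙ {ω | δ < ‖θ n ω‖}) Filter.atTop (nhds 0) := by
  intro δ hδ
  obtain ⟨C, hC, hQ⟩ :=
    Q.exists_pos_norm_le_mul_norm_apply (Q.injective_of_inner_map_self_neg hneg)
  set κ := 1 / (4 * C * (|α₁| + |α₂| + 1)) with hκ_def
  have hκ : 0 < κ := by positivity
  have hCκ : C * (|α₁| + |α₂|) * κ ≤ 1 / 4 := by
    rw [hκ_def, mul_one_div, div_le_div_iff₀ (by positivity) (by norm_num)]
    nlinarith
  refine tendsto_measure_zero_of_eventually_subset_union ℙ ?_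
    (hεconv (δ / (2 * C)) (by positivity)) (hθh κ hκ)
  filter_upwards [hh.eventually (eventually_le_nhds hκ)] with n hn ω hω
  simp only [Set.mem_union, Set.mem_ofPred_eq] at hω ⊢
  by_contra! hsmall
  obtain ⟨hε, hθκ⟩ := hsmall
  exact hω.not_ge <| le_of_le_mul_add_linear_quadratic hC (hpos n).le (norm_nonneg _)
    ((hQ _).trans (by gcongr; exact hbound n ω)) hCκ hε hn hθκ

theorem stmt14 {Ω : Type*} [MeasurableSpace Ω] (ℙ : Measure Ω) [IsProbabilityMeasure ℙ]
    {m : ℕ} (Q : EuclideanSpace ℝ (Fin m) →ₗ[ℝ] EuclideanSpace ℝ (Fin m))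
    (hsym : ∀ u v : EuclideanSpace ℝ (Fin m), ⟪Q u, v⟫ = ⟪u, Q v⟫)
    (hneg : ∀ v : EuclideanSpace ℝ (Fin m), v ≠ 0 → ⟪Q v, v⟫ < 0)
    (θ : ℕ → Ω → EuclideanSpace ℝ (Fin m)) (εn : ℕ → Ω → ℝ) (h : ℕ → ℝ) (α₁ α₂ : ℝ)
    (hpos : ∀ n, 0 < h n)
    (hh : Filter.Tendsto h Filter.atTop (nhds 0))
    (hεconv : ∀ δ : ℝ, 0 < δ →
      Filter.Tendsto (fun n => ℙ {ω | δ < |εn n ω|}) Filter.atTop (nhds 0))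
    (hθh : ∀ δ : ℝ, 0 < δ →
      Filter.Tendsto (fun n => ℙ {ω | δ < h n * ‖θ n ω‖}) Filter.atTop (nhds 0))
    (hbound : ∀ n ω, ‖Q (θ n ω)‖ ≤ εn n ω + α₁ * h n * ‖θ n ω‖ + α₂ * h n * ‖θ n ω‖^2) :
    ∀ δ : ℝ, 0 < δ →
      Filter.Tendsto (fun n => ℙ {ω | δ < ‖θ n ω‖}) Filter.atTop (nhds 0) :=
  stmt14_general ℙ Q hneg θ εn h α₁ α₂ hpos hh hεconv hθh hbound
end
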